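/- arXiv:2510.03149 — 2 statements merged into one kernel-verified Lean document; each statement's English description precedes it below -/
import Mathlib

section
/- In the ABC example, let π⋆ be uniform on {a,b}^H and let π̂ be the product distribution on {a,b}^H that independently selects 'a' in each coordinate with probability (1+ε)/(2+ε) for some ε ∈ (0,1). Then TV(π̂, π⋆) ≥ c·min(ε·√H, 1) for a universal constant c > 0. -/
open Finset

lemma sixteen_pow_le (m : ℕ) (hm : 1 ≤ m) :
    16 ^ m ≤ 4 * m * (Nat.centralBinom m) ^ 2 := by
  induction m with
  | zero => omega
  | succ n ih =>
    rcases Nat.eq_or_lt_of_le hm with h | h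
    · simp [← h, Nat.centralBinom]
    · have hn : 1 ≤ n := by omega
      have ih := ih hn
      have key := Nat.succ_mul_centralBinom_succ n
      have : (n+1) * ((n+1) * (4 * (n+1) * Nat.centralBinom (n+1) ^ 2)) =
          4 * (n+1) * (2 * (2*n+1) * Nat.centralBinom n)^2 := by
        rw [← key]; ring
      refine Nat.le_of_mul_le_mul_left (Nat.le_of_mul_le_mul_left ?_ (by omega : 0 < n+1)) (by omega : 0 < n+1)
      rw [this]
      calc (n+1) * ((n+1) * 16 ^ (n+1)) = (n+1)^2 * 16 * 16 ^ n := by ring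
        _ ≤ (n+1)^2 * 16 * (4 * n * Nat.centralBinom n ^ 2) := Nat.mul_le_mul_left _ ih
        _ ≤ 4 * (n+1) * (2 * (2*n+1) * Nat.centralBinom n)^2 := by nlinarith [sq_nonneg (Nat.centralBinom n)]



lemma central_binom_lb (m : ℕ) (hm : 1 ≤ m) :
    (4:ℝ) ^ m ≤ 2 * Real.sqrt m * Nat.centralBinom m := by
  have h := sixteen_pow_le m hm
  have h' : ((16:ℝ)) ^ m ≤ 4 * m * (Nat.centralBinom m) ^ 2 := by exact_mod_cast h
  have h4 : (4:ℝ)^m = Real.sqrt (16 ^ m) := by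
    rw [show ((16:ℝ))^m = ((4:ℝ)^m)^2 by rw [← pow_mul, mul_comm, pow_mul]; norm_num,
      Real.sqrt_sq (by positivity)]
  rw [h4]
  have : Real.sqrt (4 * m * (Nat.centralBinom m)^2) = 2 * Real.sqrt m * Nat.centralBinom m := by
    rw [show (4:ℝ) * m * (Nat.centralBinom m)^2 = (2 * Real.sqrt m * Nat.centralBinom m)^2 by
      rw [mul_pow, mul_pow, Real.sq_sqrt (by positivity)]; ring, Real.sqrt_sq (by positivity)]
  rw [← this]
  exact Real.sqrt_le_sqrt h'

lemma sigma1_lb (H : ℕ) (hH : 1 ≤ H) :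
    Real.sqrt H / 4 * 2 ^ H ≤ (H : ℝ) * Nat.choose (H-1) (H/2) := by
  rcases Nat.even_or_odd H with ⟨m, hm⟩ | ⟨m, hm⟩
  · -- H = m + m, m ≥ 1
    have hm1 : 1 ≤ m := by omega
    have hchoose : 2 * Nat.choose (H-1) (H/2) = Nat.centralBinom m := by
      have e1 : H - 1 = 2*m - 1 := by omega
      have e2 : H / 2 = m := by omega
      rw [e1, e2, Nat.centralBinom]
      have key : (2*m).choose m = (2*m-1).choose (m-1) + (2*m-1).choose m := by
        obtain ⟨k, rfl⟩ : ∃ k, m = k + 1 := ⟨m-1, by omega⟩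
        rw [show 2*(k+1) = (2*k+1)+1 by ring, Nat.choose_succ_succ,
          show 2*k+1+1-1 = 2*k+1 by omega, show k+1-1 = k by omega]
      have hsymm : (2*m-1).choose (m-1) = (2*m-1).choose m := by
        rw [← Nat.choose_symm (by omega : m ≤ 2*m-1)]
        congr 1; omega
      omega
    have hcb : (4:ℝ)^m ≤ 2 * Real.sqrt m * Nat.centralBinom m := central_binom_lb m hm1
    have e2H : (2:ℝ)^H = 4^m := by
      rw [hm, pow_add, ← mul_pow]; norm_num
    have hcR : (2:ℝ) * ((H-1).choose (H/2)) = Nat.centralBinom m := by exact_mod_cast hchoose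
    have hcast : (H:ℝ) * Nat.choose (H-1) (H/2) = m * Nat.centralBinom m := by
      have hH2 : (H:ℝ) = 2*m := by rw [hm]; push_cast; ring
      rw [hH2]; linear_combination (m:ℝ) * hcR
    rw [e2H, hcast]
    have hsm : Real.sqrt m * Real.sqrt m = m := Real.mul_self_sqrt (by positivity)
    have hsH : Real.sqrt H ≤ 2 * Real.sqrt m := by
      rw [show (2:ℝ) * Real.sqrt m = Real.sqrt ((2*Real.sqrt m)^2) by
        rw [Real.sqrt_sq (by positivity)]]
      apply Real.sqrt_le_sqrt
      rw [mul_pow, Real.sq_sqrt (by positivity)]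
      rw [hm]; push_cast; nlinarith
    have h1 := mul_le_mul_of_nonneg_right hsH (le_of_lt (pow_pos (by norm_num : (0:ℝ) < 4) m))
    have h2 : Real.sqrt m * (4:ℝ)^m ≤ Real.sqrt m * (2 * Real.sqrt m * Nat.centralBinom m) :=
      mul_le_mul_of_nonneg_left hcb (Real.sqrt_nonneg (m:ℝ))
    nlinarith [hsm, (Nat.cast_nonneg (Nat.centralBinom m) : (0:ℝ) ≤ _)]
  · -- H = 2m+1
    rcases Nat.eq_zero_or_pos m with rfl | hm1
    · norm_num at hm
      subst hm
      norm_num [Real.sqrt_one]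
    have e1 : H - 1 = 2*m := by omega
    have e2 : H / 2 = m := by omega
    rw [e1, e2]
    have hcb : (4:ℝ)^m ≤ 2 * Real.sqrt m * Nat.centralBinom m := central_binom_lb m hm1
    have e2H : (2:ℝ)^H = 2 * 4^m := by
      rw [hm, pow_add, pow_mul]; norm_num; ring
    rw [e2H]
    have hsm : Real.sqrt m * Real.sqrt m = m := Real.mul_self_sqrt (by positivity)
    have hsH : Real.sqrt H * Real.sqrt H = H := Real.mul_self_sqrt (by positivity)
    have hle : Real.sqrt m ≤ Real.sqrt H := Real.sqrt_le_sqrt (by rw [hm]; push_cast; nlinarith)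
    have hcB : (Nat.centralBinom m : ℝ) = ((2*m).choose m : ℝ) := by rw [Nat.centralBinom]
    rw [← hcB]
    have h1 := mul_le_mul_of_nonneg_left hcb (Real.sqrt_nonneg (H:ℝ))
    have h2 := mul_le_mul_of_nonneg_right hle (Nat.cast_nonneg (Nat.centralBinom m) : (0:ℝ) ≤ _)
    have h3 := mul_le_mul_of_nonneg_left h2 (by positivity : (0:ℝ) ≤ 2 * Real.sqrt H)
    nlinarith [hsH]

lemma choose_weight_identity (H k : ℕ) (hk : 1 ≤ k) (hH : 1 ≤ H) :
    (2*(k:ℝ) - H) * (H.choose k) =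
      (H:ℝ) * ((H-1).choose (k-1)) - (H:ℝ) * ((H-1).choose k) := by
  have nat1 : k * H.choose k = H * (H-1).choose (k-1) := by
    have := Nat.add_one_mul_choose_eq (H-1) (k-1)
    rw [Nat.sub_add_cancel hH] at this
    rw [show k-1+1 = k by omega] at this
    rw [this]; ring
  have pascal : H.choose k = (H-1).choose (k-1) + (H-1).choose k := by
    obtain ⟨n, rfl⟩ : ∃ n, H = n + 1 := ⟨H-1, by omega⟩
    obtain ⟨j, rfl⟩ : ∃ j, k = j + 1 := ⟨k-1, by omega⟩
    simp [Nat.choose_succ_succ']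
  have r1 : (k:ℝ) * (H.choose k) = (H:ℝ) * ((H-1).choose (k-1)) := by exact_mod_cast nat1
  have r2 : ((H.choose k : ℕ):ℝ) = ((H-1).choose (k-1) : ℝ) + ((H-1).choose k : ℝ) := by
    exact_mod_cast pascal
  nlinarith [r1, r2]

lemma telescope_sum (H : ℕ) (hH : 1 ≤ H) :
    ∑ k ∈ Ico (H/2+1) (H+1), (2*(k:ℝ) - H) * (H.choose k)
      = (H:ℝ) * ((H-1).choose (H/2)) := by
  have hab : H/2 + 1 ≤ H + 1 := by omega
  rw [Finset.sum_Ico_eq_sum_range]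
  have : ∀ j ∈ range (H + 1 - (H/2 + 1)),
      (2*((H/2 + 1 + j : ℕ):ℝ) - H) * (H.choose (H/2 + 1 + j))
        = (fun t => (H:ℝ) * ((H-1).choose (H/2 + t))) j
          - (fun t => (H:ℝ) * ((H-1).choose (H/2 + t))) (j+1) := by
    intro j hj
    have := choose_weight_identity H (H/2 + 1 + j) (by omega) hH
    rw [this, show H/2 + 1 + j - 1 = H/2 + j by omega,
      show H/2 + 1 + j = H/2 + (j + 1) by omega]
  rw [Finset.sum_congr rfl this, Finset.sum_range_sub']
  simp only [Nat.add_zero]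
  have : H/2 + (H + 1 - (H/2 + 1)) = H := by omega
  rw [this, Nat.choose_eq_zero_of_lt (by omega : H - 1 < H)]
  simp

def finsetBoolEquiv (H : ℕ) : Finset (Fin H) ≃ (Fin H → Bool) where
  toFun s := fun i => i ∈ s
  invFun y := univ.filter (fun i => y i = true)
  left_inv s := by ext i; simp
  right_inv y := by funext i; simp

lemma sum_prod_boolfun (H : ℕ) (a b : ℝ) (F : ℝ → ℝ) :
    ∑ y : Fin H → Bool, F (∏ i, if y i then a else b)
      = ∑ k ∈ range (H+1), (H.choose k : ℝ) * F (a^k * b^(H-k)) := by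
  rw [← Equiv.sum_comp (finsetBoolEquiv H) (fun y => F (∏ i, if y i then a else b))]
  have key : ∀ s : Finset (Fin H),
      (∏ i, if (finsetBoolEquiv H) s i then a else b) = a ^ s.card * b ^ (H - s.card) := by
    intro s
    have : ∀ i, (if (finsetBoolEquiv H) s i then a else b) = if i ∈ s then a else b := by
      intro i; simp [finsetBoolEquiv]
    rw [Finset.prod_congr rfl (fun i _ => this i), Finset.prod_ite (fun _ => a) (fun _ => b),
      Finset.prod_const, Finset.prod_const]
    congr 1
    · congr 1
      have h0 : filter (fun x => x ∈ s) univ = s := by ext i; simp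
      rw [h0]
    · congr 1
      have h1 : filter (fun x => x ∉ s) univ = sᶜ := by ext i; simp
      rw [h1, Finset.card_compl, Fintype.card_fin]
  simp_rw [key]
  rw [show ((univ : Finset (Finset (Fin H)))) = (univ : Finset (Fin H)).powerset by
    rw [Finset.powerset_univ]]
  rw [Finset.sum_powerset_apply_card (fun k => F (a^k * b^(H-k)))]
  simp [Finset.card_univ, nsmul_eq_mul]



lemma sum_choose_mul (H : ℕ) (x y : ℝ) :
    ∑ k ∈ range (H+1), (H.choose k : ℝ) * (x^k * y^(H-k)) = (x + y)^H := by
  rw [add_pow]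
  exact Finset.sum_congr rfl fun k _ => by ring

lemma sum_choose_real (H : ℕ) : ∑ k ∈ range (H+1), (H.choose k : ℝ) = 2^H := by
  exact_mod_cast congrArg (Nat.cast : ℕ → ℝ) (Nat.sum_range_choose H)

lemma tv_lower_event (H : ℕ) (f g : ℕ → ℝ) (A : Finset ℕ) (hA : A ⊆ range (H+1))
    (hf : ∑ k ∈ range (H+1), f k = 1) (hg : ∑ k ∈ range (H+1), g k = 1) :
    ∑ k ∈ A, (f k - g k) ≤ (1/2) * ∑ k ∈ range (H+1), |f k - g k| := by
  have hsplit := Finset.sum_sdiff (f := fun k => f k - g k) hA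
  have habs := Finset.sum_sdiff (f := fun k => |f k - g k|) hA
  have htot : ∑ k ∈ range (H+1), (f k - g k) = 0 := by
    rw [Finset.sum_sub_distrib, hf, hg]; ring
  have h1 : ∑ k ∈ A, (f k - g k) ≤ ∑ k ∈ A, |f k - g k| :=
    Finset.sum_le_sum fun k _ => le_abs_self _
  have h2 : - ∑ k ∈ (range (H+1)) \ A, (f k - g k) ≤ ∑ k ∈ (range (H+1)) \ A, |f k - g k| := by
    rw [← Finset.sum_neg_distrib]
    exact Finset.sum_le_sum fun k _ => neg_le_abs _
  linarith

set_option maxHeartbeats 1000000 in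
lemma tv_small (H : ℕ) (hH : 1 ≤ H) (θ : ℝ) (hθ0 : 0 < θ) (hθ1 : θ < 1)
    (hsmall : θ * Real.sqrt H ≤ 1/8) :
    θ * Real.sqrt H / 16
      ≤ (1/2) * ∑ k ∈ range (H+1),
          (H.choose k : ℝ) * |((1+θ)/2)^k * ((1-θ)/2)^(H-k) - (1/2)^H| := by
  set p : ℝ := (1+θ)/2 with hp
  set q : ℝ := (1-θ)/2 with hq
  have hsqH : Real.sqrt H * Real.sqrt H = H := Real.mul_self_sqrt (Nat.cast_nonneg H)
  have hsqHnn : 0 ≤ Real.sqrt H := Real.sqrt_nonneg _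
  have husq : (θ * Real.sqrt H) * (θ * Real.sqrt H) = (H:ℝ) * θ^2 :=
    calc (θ * Real.sqrt H) * (θ * Real.sqrt H) = (Real.sqrt H * Real.sqrt H) * θ^2 := by ring
      _ = (H:ℝ) * θ^2 := by rw [hsqH]
  have hHθ : (H:ℝ) * θ^2 ≤ (1/8) * (θ * Real.sqrt H) := by
    nlinarith [mul_le_mul_of_nonneg_right hsmall (mul_nonneg hθ0.le hsqHnn), husq]
  have hHθ2 : (H:ℝ) * θ^2 ≤ 1/64 := by
    nlinarith [mul_le_mul_of_nonneg_right hsmall (mul_nonneg hθ0.le hsqHnn), husq]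
  have hev := tv_lower_event H (fun k => (H.choose k : ℝ) * (p^k * q^(H-k)))
      (fun k => (H.choose k : ℝ) * (1/2)^H) (Ico (H/2+1) (H+1))
      (fun k hk => by simp only [Finset.mem_Ico] at hk; simp only [Finset.mem_range]; omega)
      (by rw [sum_choose_mul, show p + q = 1 by rw [hp, hq]; ring, one_pow])
      (by
        rw [← Finset.sum_mul, sum_choose_real, ← mul_pow]
        norm_num)
  have habs : ∀ k, (fun k => (H.choose k : ℝ) * (p^k * q^(H-k))) k
      - (fun k => (H.choose k : ℝ) * (1/2)^H) k
      = (H.choose k : ℝ) * (p^k * q^(H-k) - (1/2)^H) := fun k => by ring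
  simp only [habs] at hev
  have habs2 : ∀ k, |(H.choose k : ℝ) * (p^k * q^(H-k) - (1/2)^H)|
      = (H.choose k : ℝ) * |p^k * q^(H-k) - (1/2)^H| := fun k => by
    rw [abs_mul, abs_of_nonneg (by positivity : (0:ℝ) ≤ (H.choose k : ℝ))]
  simp only [habs2] at hev
  refine le_trans ?_ hev
  -- pointwise lower bound on the event
  have hpoint : ∀ k ∈ Ico (H/2+1) (H+1),
      (1/2:ℝ)^H * ((3/4) * θ * ((2*(k:ℝ) - H) * (H.choose k)) - (H:ℝ)*θ^2 * (H.choose k))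
        ≤ (H.choose k : ℝ) * (p^k * q^(H-k) - (1/2)^H) := by
    intro k hk
    simp only [Finset.mem_Ico] at hk
    have hkH : k ≤ H := by omega
    have hk2 : H < 2*k := by omega
    have key : p^k * q^(H-k) = (1/2:ℝ)^H * ((1+θ)^(2*k-H) * (1-θ^2)^(H-k)) :=
      calc p^k * q^(H-k)
          = ((1+θ)^(2*k-H) * ((1+θ)*(1-θ))^(H-k)) / 2^H := by
            rw [hp, hq, div_pow, div_pow, div_mul_div_comm, ← pow_add,
              show k + (H-k) = H by omega,
              show (1+θ)^k = (1+θ)^(2*k-H) * (1+θ)^(H-k) by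
                rw [← pow_add]; congr 1; omega,
              mul_pow]
            ring
        _ = (1/2:ℝ)^H * ((1+θ)^(2*k-H) * (1-θ^2)^(H-k)) := by
            rw [show ((1:ℝ)+θ)*(1-θ) = 1-θ^2 by ring, one_div, inv_pow, ← div_eq_inv_mul]
    have hjr : ((2*k-H:ℕ):ℝ) = 2*(k:ℝ) - H := by
      rw [Nat.cast_sub (by omega : H ≤ 2*k)]; push_cast; ring
    have hα : (1:ℝ) ≤ 2*(k:ℝ) - H := by
      have : ((H:ℕ):ℝ) + 1 ≤ 2*(k:ℝ) := by exact_mod_cast hk2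
      linarith
    have b1 : 1 + (2*(k:ℝ)-H) * θ ≤ (1+θ)^(2*k-H) := by
      have := one_add_mul_le_pow (by linarith : (-2:ℝ) ≤ θ) (2*k-H)
      rw [hjr] at this
      exact this
    have b3 : 1 - (H:ℝ)*θ^2 ≤ (1-θ^2)^H := by
      have h := one_add_mul_le_pow (by nlinarith : (-2:ℝ) ≤ -θ^2) H
      rw [show (1:ℝ) + -θ^2 = 1 - θ^2 by ring] at h
      linarith
    have hb0 : (0:ℝ) ≤ 1 - θ^2 := by nlinarith
    have hb1 : (1:ℝ) - θ^2 ≤ 1 := by nlinarith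
    have b2 : (1-θ^2)^H ≤ (1-θ^2)^(H-k) :=
      pow_le_pow_of_le_one hb0 hb1 (by omega)
    have hprod : (1 + (2*(k:ℝ)-H)*θ) * (1 - (H:ℝ)*θ^2)
        ≤ (1+θ)^(2*k-H) * (1-θ^2)^(H-k) := by
      apply mul_le_mul b1 (b3.trans b2) (by nlinarith) (by positivity)
    have hαθ : 0 ≤ (2*(k:ℝ)-H)*θ := mul_nonneg (by linarith) hθ0.le
    have main : (3/4)*θ*(2*(k:ℝ)-H) - (H:ℝ)*θ^2
        ≤ (1+θ)^(2*k-H) * (1-θ^2)^(H-k) - 1 := by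
      nlinarith [hprod, mul_le_mul_of_nonneg_left hHθ2 hαθ]
    have hmul := mul_le_mul_of_nonneg_left main
      (show (0:ℝ) ≤ (H.choose k:ℝ)*(1/2)^H by positivity)
    rw [key]
    nlinarith [hmul]
  refine le_trans ?_ (Finset.sum_le_sum hpoint)
  -- evaluate the lower-bounding sum
  have hsum_eq : ∑ k ∈ Ico (H/2+1) (H+1),
      (1/2:ℝ)^H * ((3/4) * θ * ((2*(k:ℝ) - H) * (H.choose k)) - (H:ℝ)*θ^2 * (H.choose k))
      = (1/2:ℝ)^H * ((3/4) * θ * ((H:ℝ) * ((H-1).choose (H/2)))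
          - (H:ℝ)*θ^2 * ∑ k ∈ Ico (H/2+1) (H+1), (H.choose k : ℝ)) := by
    rw [← Finset.mul_sum, Finset.sum_sub_distrib, ← Finset.mul_sum, ← Finset.mul_sum,
      telescope_sum H hH]
  rw [hsum_eq]
  have hSc : ∑ k ∈ Ico (H/2+1) (H+1), (H.choose k : ℝ) ≤ 2^H := by
    calc ∑ k ∈ Ico (H/2+1) (H+1), (H.choose k : ℝ)
        ≤ ∑ k ∈ range (H+1), (H.choose k : ℝ) := by
          apply Finset.sum_le_sum_of_subset_of_nonneg
          · intro k hk; simp only [Finset.mem_Ico] at hk; simp only [Finset.mem_range]; omega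
          · intro k _ _; positivity
      _ = 2^H := sum_choose_real H
  have hT := sigma1_lb H hH
  have h2H : (1/2:ℝ)^H * 2^H = 1 := by rw [← mul_pow]; norm_num
  have hpow_pos : (0:ℝ) < (1/2:ℝ)^H := by positivity
  have step1 : (1/2:ℝ)^H * ((3/4) * θ * (Real.sqrt H / 4 * 2^H) - (H:ℝ)*θ^2 * 2^H)
      ≤ (1/2:ℝ)^H * ((3/4) * θ * ((H:ℝ) * ((H-1).choose (H/2)))
          - (H:ℝ)*θ^2 * ∑ k ∈ Ico (H/2+1) (H+1), (H.choose k : ℝ)) := by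
    apply mul_le_mul_of_nonneg_left _ hpow_pos.le
    have l1 : (3/4) * θ * (Real.sqrt H / 4 * 2^H) ≤ (3/4) * θ * ((H:ℝ) * ((H-1).choose (H/2))) :=
      mul_le_mul_of_nonneg_left hT (by positivity)
    have l2 : (H:ℝ)*θ^2 * ∑ k ∈ Ico (H/2+1) (H+1), (H.choose k : ℝ) ≤ (H:ℝ)*θ^2 * 2^H :=
      mul_le_mul_of_nonneg_left hSc (by positivity)
    linarith
  refine le_trans ?_ step1
  have expand : (1/2:ℝ)^H * ((3/4) * θ * (Real.sqrt H / 4 * 2^H) - (H:ℝ)*θ^2 * 2^H)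
      = (3/16) * (θ * Real.sqrt H) - (H:ℝ)*θ^2 := by
    field_simp
    linear_combination (48*Real.sqrt H - 256*θ*H) * h2H
  rw [expand]
  linarith [hHθ]


lemma abs_sub_ge_bc (a b : ℝ) (ha : 0 ≤ a) (hb : 0 ≤ b) :
    a + b - 2 * Real.sqrt (a*b) ≤ |a - b| := by
  have hsa : Real.sqrt a ^ 2 = a := Real.sq_sqrt ha
  have hsb : Real.sqrt b ^ 2 = b := Real.sq_sqrt hb
  have hab : Real.sqrt (a*b) = Real.sqrt a * Real.sqrt b := Real.sqrt_mul ha b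
  have hfac : (Real.sqrt a - Real.sqrt b) * (Real.sqrt a + Real.sqrt b) = a - b := by
    rw [show (Real.sqrt a - Real.sqrt b) * (Real.sqrt a + Real.sqrt b)
      = Real.sqrt a ^ 2 - Real.sqrt b ^ 2 by ring, hsa, hsb]
  have h1 : |a - b| = |Real.sqrt a - Real.sqrt b| * (Real.sqrt a + Real.sqrt b) := by
    rw [← hfac, abs_mul, abs_of_nonneg (add_nonneg (Real.sqrt_nonneg a) (Real.sqrt_nonneg b))]
  have h2 : |Real.sqrt a - Real.sqrt b| ≤ Real.sqrt a + Real.sqrt b := by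
    rw [abs_le]
    constructor <;> nlinarith [Real.sqrt_nonneg a, Real.sqrt_nonneg b]
  have h3 : (Real.sqrt a - Real.sqrt b)^2 ≤ |a - b| := by
    rw [h1]
    calc (Real.sqrt a - Real.sqrt b)^2
        = |Real.sqrt a - Real.sqrt b| * |Real.sqrt a - Real.sqrt b| := by
          rw [abs_mul_abs_self]; ring
      _ ≤ |Real.sqrt a - Real.sqrt b| * (Real.sqrt a + Real.sqrt b) :=
          mul_le_mul_of_nonneg_left h2 (abs_nonneg _)
  nlinarith [h3]

set_option maxHeartbeats 1000000 in
lemma tv_large (H : ℕ) (θ : ℝ) (hθ0 : 0 < θ) (hθ1 : θ < 1) :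
    (H:ℝ)*θ^2 / (8 + (H:ℝ)*θ^2)
      ≤ (1/2) * ∑ k ∈ range (H+1),
          (H.choose k : ℝ) * |((1+θ)/2)^k * ((1-θ)/2)^(H-k) - (1/2)^H| := by
  set u : ℝ := Real.sqrt ((1+θ)/4) with hu
  set v : ℝ := Real.sqrt ((1-θ)/4) with hv
  have hu2 : u^2 = (1+θ)/4 := Real.sq_sqrt (by linarith)
  have hv2 : v^2 = (1-θ)/4 := Real.sq_sqrt (by linarith)
  have hunn : 0 ≤ u := Real.sqrt_nonneg _
  have hvnn : 0 ≤ v := Real.sqrt_nonneg _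
  -- pointwise Bhattacharyya bound
  have hpt : ∀ k ∈ range (H+1),
      (H.choose k : ℝ) * (((1+θ)/2)^k * ((1-θ)/2)^(H-k)) + (H.choose k : ℝ) * ((1/2)^H)
        - 2 * ((H.choose k : ℝ) * (u^k * v^(H-k)))
      ≤ (H.choose k : ℝ) * |((1+θ)/2)^k * ((1-θ)/2)^(H-k) - (1/2)^H| := by
    intro k hk
    simp only [Finset.mem_range] at hk
    have hkH : k ≤ H := by omega
    have habprod : (((1+θ)/2)^k * ((1-θ)/2)^(H-k)) * ((1/2:ℝ)^H)
        = ((1+θ)/4)^k * ((1-θ)/4)^(H-k) := by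
      rw [show ((1:ℝ)/2)^H = (1/2)^k * (1/2)^(H-k) by rw [← pow_add]; congr 1; omega]
      rw [show ((1+θ)/2)^k * ((1-θ)/2)^(H-k) * ((1/2:ℝ)^k * (1/2)^(H-k))
        = (((1+θ)/2) * (1/2))^k * (((1-θ)/2) * (1/2))^(H-k) by rw [mul_pow, mul_pow]; ring]
      rw [show ((1+θ)/2) * (1/2:ℝ) = (1+θ)/4 by ring, show ((1-θ)/2) * (1/2:ℝ) = (1-θ)/4 by ring]
    have hsq : Real.sqrt ((((1+θ)/2)^k * ((1-θ)/2)^(H-k)) * ((1/2:ℝ)^H)) = u^k * v^(H-k) := by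
      rw [habprod, show ((1+θ)/4)^k * ((1-θ)/4)^(H-k) = (u^k * v^(H-k))^2 by
        rw [mul_pow, ← pow_mul, ← pow_mul, mul_comm k 2, mul_comm (H-k) 2, pow_mul, pow_mul,
          hu2, hv2]]
      exact Real.sqrt_sq (mul_nonneg (pow_nonneg hunn k) (pow_nonneg hvnn _))
    have := abs_sub_ge_bc (((1+θ)/2)^k * ((1-θ)/2)^(H-k)) ((1/2:ℝ)^H)
      (mul_nonneg (pow_nonneg (by linarith : (0:ℝ) ≤ (1+θ)/2) _)
        (pow_nonneg (by linarith : (0:ℝ) ≤ (1-θ)/2) _)) (by positivity)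
    rw [hsq] at this
    nlinarith [this, (by positivity : (0:ℝ) ≤ (H.choose k : ℝ))]
  have hsum := Finset.sum_le_sum hpt
  have e1 : ∑ k ∈ range (H+1), (H.choose k : ℝ) * (((1+θ)/2)^k * ((1-θ)/2)^(H-k)) = 1 := by
    rw [sum_choose_mul, show (1+θ)/2 + (1-θ)/2 = (1:ℝ) by ring, one_pow]
  have e2 : ∑ k ∈ range (H+1), (H.choose k : ℝ) * ((1/2:ℝ)^H) = 1 := by
    have : ∑ k ∈ range (H+1), (H.choose k : ℝ) * ((1/2:ℝ)^H)
        = ∑ k ∈ range (H+1), (H.choose k : ℝ) * ((1/2)^k * (1/2)^(H-k)) := by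
      apply Finset.sum_congr rfl
      intro k hk
      simp only [Finset.mem_range] at hk
      rw [← pow_add, show k + (H-k) = H by omega]
    rw [this, sum_choose_mul]
    norm_num
  have e3 : ∑ k ∈ range (H+1), (H.choose k : ℝ) * (u^k * v^(H-k)) = (u+v)^H :=
    sum_choose_mul H u v
  -- bound (u+v)^H
  have hθ2 : θ^2 ≤ 1 := by nlinarith
  have hx : (0:ℝ) ≤ θ^2/8 := by positivity
  have hx1 : θ^2/8 ≤ 1 := by nlinarith
  have huv : u + v ≤ 1 - θ^2/8 := by
    have hsq1 : Real.sqrt (1-θ^2) ≤ 1 - θ^2/2 := by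
      rw [show (1:ℝ) - θ^2/2 = Real.sqrt ((1-θ^2/2)^2) by rw [Real.sqrt_sq (by nlinarith)]]
      apply Real.sqrt_le_sqrt
      nlinarith
    have huvsq : (u+v)^2 = 1/2 + Real.sqrt (1-θ^2)/2 := by
      have huvm : u * v = Real.sqrt ((1-θ^2)/16) := by
        rw [hu, hv, ← Real.sqrt_mul (by linarith)]
        congr 1
        ring
      have h16 : Real.sqrt ((1-θ^2)/16) = Real.sqrt (1-θ^2)/4 := by
        rw [show (1-θ^2)/16 = (1-θ^2) * (1/16 : ℝ) by ring, Real.sqrt_mul (by nlinarith),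
          show Real.sqrt (1/16 : ℝ) = 1/4 by
            rw [show (1/16:ℝ) = (1/4:ℝ)^2 by norm_num, Real.sqrt_sq]; norm_num]
        ring
      have : (u+v)^2 = u^2 + v^2 + 2*(u*v) := by ring
      rw [this, hu2, hv2, huvm, h16]
      ring
    have h1 : (u+v)^2 ≤ (1-θ^2/8)^2 := by
      rw [huvsq]
      nlinarith [hsq1, sq_nonneg (θ^2)]
    have h2 : 0 ≤ u + v := by positivity
    nlinarith [h1, h2]
  have hBern : 1 + (H:ℝ)*(θ^2/8) ≤ (1 + θ^2/8)^H := one_add_mul_le_pow (by linarith) H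
  have hprod1 : (1 - θ^2/8)^H * (1 + θ^2/8)^H ≤ 1 := by
    rw [← mul_pow]
    apply pow_le_one₀ (by nlinarith) (by nlinarith)
  have hBpos : (0:ℝ) < 1 + (H:ℝ)*(θ^2/8) := by positivity
  have hfinal : (u+v)^H ≤ 1 / (1 + (H:ℝ)*(θ^2/8)) := by
    have huvH : (u+v)^H ≤ (1-θ^2/8)^H := pow_le_pow_left₀ (by positivity) huv H
    rw [le_div_iff₀ hBpos]
    calc (u+v)^H * (1 + (H:ℝ)*(θ^2/8))
        ≤ (1-θ^2/8)^H * (1 + (H:ℝ)*(θ^2/8)) :=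
          mul_le_mul_of_nonneg_right huvH hBpos.le
      _ ≤ (1-θ^2/8)^H * (1 + θ^2/8)^H :=
          mul_le_mul_of_nonneg_left hBern (pow_nonneg (by nlinarith) H)
      _ ≤ 1 := hprod1
  -- combine
  have lhs_eq : ∑ k ∈ range (H+1),
      ((H.choose k : ℝ) * (((1+θ)/2)^k * ((1-θ)/2)^(H-k)) + (H.choose k : ℝ) * ((1/2:ℝ)^H)
        - 2 * ((H.choose k : ℝ) * (u^k * v^(H-k))))
      = (∑ k ∈ range (H+1), (H.choose k : ℝ) * (((1+θ)/2)^k * ((1-θ)/2)^(H-k)))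
        + (∑ k ∈ range (H+1), (H.choose k : ℝ) * ((1/2:ℝ)^H))
        - 2 * ∑ k ∈ range (H+1), (H.choose k : ℝ) * (u^k * v^(H-k)) := by
    rw [Finset.sum_sub_distrib, Finset.sum_add_distrib, ← Finset.mul_sum]
  rw [lhs_eq, e1, e2, e3] at hsum
  have h8 : (0:ℝ) < 8 + (H:ℝ)*θ^2 := by positivity
  have h18 : (0:ℝ) < 1 + (H:ℝ)*(θ^2/8) := by positivity
  have heq : 1/(1+(H:ℝ)*(θ^2/8)) = 8/(8+(H:ℝ)*θ^2) := by
    rw [div_eq_div_iff h18.ne' h8.ne']; ring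
  have heq2 : (H:ℝ)*θ^2/(8+(H:ℝ)*θ^2) = 1 - 8/(8+(H:ℝ)*θ^2) := by
    field_simp
    ring
  rw [heq] at hfinal
  rw [heq2]
  linarith [hfinal, hsum]

/-- **Failure of action-level rejection sampling in the ABC example.** Let `π⋆` be
uniform on `{a,b}^H` (here `{a,b} = Bool`, with `a = true`) and let `π̂` be the product
distribution selecting `a` independently with probability `(1+ε)/(2+ε)` in each
coordinate. Then `TV(π̂, π⋆) ≥ c · min(ε·√H, 1)` for a universal constant `c > 0`. -/
theorem abc_tv_lower_bound :
    ∃ c > (0 : ℝ), ∀ (H : ℕ) (ε : ℝ), 0 < ε → ε < 1 →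
      c * min (ε * Real.sqrt H) 1
        ≤ (1 / 2) * ∑ y : Fin H → Bool,
            |(∏ i, (if y i then (1 + ε) / (2 + ε) else 1 / (2 + ε))) - (1 / 2 : ℝ) ^ H| := by
  refine ⟨1/216, by norm_num, ?_⟩
  intro H ε hε hε1
  rcases Nat.eq_zero_or_pos H with rfl | hH
  · norm_num [Real.sqrt_zero]
  set θ : ℝ := ε/(2+ε) with hθdef
  have h2ε : (0:ℝ) < 2 + ε := by linarith
  have hθ0 : 0 < θ := div_pos hε h2ε
  have hθ1 : θ < 1 := by rw [hθdef, div_lt_one h2ε]; linarith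
  have hp : (1+ε)/(2+ε) = (1+θ)/2 := by rw [hθdef]; field_simp; ring
  have hq : 1/(2+ε) = (1-θ)/2 := by rw [hθdef]; field_simp; ring
  have hεθ : ε ≤ 3*θ := by
    rw [hθdef, mul_div_assoc']
    rw [le_div_iff₀ h2ε]
    nlinarith
  have hsqHnn : 0 ≤ Real.sqrt H := Real.sqrt_nonneg _
  have hεu : ε * Real.sqrt H ≤ 3 * (θ * Real.sqrt H) := by
    have := mul_le_mul_of_nonneg_right hεθ hsqHnn
    linarith
  have hrw := sum_prod_boolfun H ((1+θ)/2) ((1-θ)/2) (fun x => |x - (1/2:ℝ)^H|)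
  simp only [hp, hq]
  rw [hrw]
  rcases le_or_gt (θ * Real.sqrt H) (1/8) with hc | hc
  · refine le_trans ?_ (tv_small H hH θ hθ0 hθ1 hc)
    have hm := min_le_left (ε * Real.sqrt H) 1
    have hunn : 0 ≤ θ * Real.sqrt H := mul_nonneg hθ0.le hsqHnn
    linarith
  · refine le_trans ?_ (tv_large H θ hθ0 hθ1)
    have hu2 : (θ * Real.sqrt H)^2 = (H:ℝ)*θ^2 := by
      rw [mul_pow, Real.sq_sqrt (Nat.cast_nonneg H)]; ring
    rw [← hu2]
    set u : ℝ := θ * Real.sqrt H with hudef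
    have hu0 : (0:ℝ) < u := by linarith
    rcases le_or_gt 1 u with h1u | h1u
    · have h9 : (1/9:ℝ) ≤ u^2/(8+u^2) := by
        rw [le_div_iff₀ (by positivity)]
        nlinarith
      have hm := min_le_right (ε * Real.sqrt H) 1
      linarith
    · have hm := min_le_left (ε * Real.sqrt H) 1
      have h72 : u/72 ≤ u^2/(8+u^2) := by
        rw [div_le_div_iff₀ (by norm_num) (by positivity)]
        nlinarith [mul_lt_mul_of_pos_right hc hu0, mul_lt_mul_of_pos_left h1u (by positivity : (0:ℝ) < u^2)]
      linarith
end

section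
/- Let π_ref be a distribution on A^H, τ a tilt function with V⋆(∅) = E_{π_ref}[τ] > 0, π⋆ ∝ π_ref·τ, and V̂ an approximate value function satisfying the average-case error bounds E_{π⋆}[V̂(y_{1:h})/V⋆(y_{1:h})] ≤ κ and E_{π⋆}[V⋆(y_{1:h})/V̂(y_{1:h})] ≤ κ for each h ∈ [H]. For η > 0 define the bad set B_{h,η} = { y_{1:h} : π_ref(y_{1:h})·V̂(y_{1:h}) < (η²/4κ²)·Σ_{y_{h+1:H}} π_ref(y_{1:H})·V̂(y_{1:H}) }. Then π⋆(B_{h,η}) ≤ η for every h and η. -/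
open Finset

/-- The marginal probability that a sample from `μ` agrees with `y` on its first `h`
coordinates (the prefix marginal `μ(y_{1:h})`). -/
noncomputable def prefixMarg {H : ℕ} {A : Type*} [Fintype A] [DecidableEq A]
    (μ : (Fin H → A) → ℝ) (h : ℕ) (y : Fin H → A) : ℝ :=
  ∑ z : Fin H → A, if ∀ i : Fin H, (i : ℕ) < h → z i = y i then μ z else 0

/-- The value function `V⋆(y_{1:h}) = E_{π_ref}[τ(y_{1:H}) | y_{1:h}]`. -/
noncomputable def prefixVstar {H : ℕ} {A : Type*} [Fintype A] [DecidableEq A]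
    (πref τ : (Fin H → A) → ℝ) (h : ℕ) (y : Fin H → A) : ℝ :=
  (∑ z : Fin H → A, if ∀ i : Fin H, (i : ℕ) < h → z i = y i then πref z * τ z else 0) /
    prefixMarg πref h y

/-- The sum `∑_{y_{h+1:H}} π_ref(y_{1:H})·V̂(y_{1:H})` over all completions of the
`h`-prefix of `y`. -/
noncomputable def leafSum {H : ℕ} {A : Type*} [Fintype A] [DecidableEq A]
    (πref : (Fin H → A) → ℝ) (VhatH : (Fin H → A) → ℝ) (h : ℕ) (y : Fin H → A) : ℝ :=
  ∑ z : Fin H → A, if ∀ i : Fin H, (i : ℕ) < h → z i = y i then πref z * VhatH z else 0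

section helper

variable {H : ℕ} {A : Type*} [Fintype A] [DecidableEq A]

lemma markov_aux {ι : Type*} [Fintype ι] (w f : ι → ℝ) (K t : ℝ) (ht : 0 < t)
    (hw : ∀ i, 0 ≤ w i) (hf : ∀ i, 0 ≤ f i)
    (hsum : ∑ i, w i * f i ≤ K) (P : ι → Prop) [DecidablePred P]
    (hP : ∀ i, P i → 0 < w i → t ≤ f i) :
    (∑ i, if P i then w i else 0) ≤ K / t := by
  have h1 : ∀ i, (if P i then w i else 0) ≤ w i * f i / t := by
    intro i
    by_cases hp : P i
    · simp only [hp, if_true]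
      rcases eq_or_lt_of_le (hw i) with h0 | h0
      · rw [← h0, zero_mul, zero_div]
      · have h2 := hP i hp h0
        rw [le_div_iff₀ ht]
        nlinarith
    · simp only [hp, if_false]
      exact div_nonneg (mul_nonneg (hw i) (hf i)) ht.le
  calc (∑ i, if P i then w i else 0) ≤ ∑ i, w i * f i / t :=
        Finset.sum_le_sum fun i _ => h1 i
    _ = (∑ i, w i * f i) / t := by rw [← Finset.sum_div]
    _ ≤ K / t := by gcongr

lemma prefix_sum_congr (F : (Fin H → A) → ℝ) (h : ℕ) (y y' : Fin H → A)
    (hyy : ∀ i : Fin H, (i : ℕ) < h → y i = y' i) :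
    (∑ z : Fin H → A, if ∀ i : Fin H, (i : ℕ) < h → z i = y i then F z else 0)
      = ∑ z : Fin H → A, if ∀ i : Fin H, (i : ℕ) < h → z i = y' i then F z else 0 := by
  refine Finset.sum_congr rfl fun z _ => if_congr ?_ rfl rfl
  constructor <;> intro hz i hi
  · exact (hz i hi).trans (hyy i hi)
  · exact (hz i hi).trans (hyy i hi).symm

lemma count_const (h : ℕ) (z z' : Fin H → A) :
    (∑ y : Fin H → A, if ∀ i : Fin H, (i : ℕ) < h → y i = z i then (1:ℝ) else 0)
      = ∑ y : Fin H → A, if ∀ i : Fin H, (i : ℕ) < h → y i = z' i then (1:ℝ) else 0 := by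
  set σ : (Fin H → A) → (Fin H → A) :=
    fun y i => if (i : ℕ) < h then Equiv.swap (z i) (z' i) (y i) else y i with hσ
  have hinv : Function.Involutive σ := by
    intro y; funext i
    by_cases hi : (i : ℕ) < h <;> simp [hσ, hi, Equiv.swap_apply_self]
  refine Fintype.sum_bijective σ hinv.bijective _ _ ?_
  intro y
  refine if_congr ?_ rfl rfl
  constructor
  · intro hy i hi
    simp only [hσ, if_pos hi]
    rw [hy i hi, Equiv.swap_apply_left]
  · intro hy i hi
    have h1 := hy i hi
    simp only [hσ, if_pos hi] at h1
    have h2 : Equiv.swap (z i) (z' i) (y i) = Equiv.swap (z i) (z' i) (z i) := by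
      rw [Equiv.swap_apply_left]; exact h1
    exact (Equiv.swap (z i) (z' i)).injective h2

lemma count_pos (h : ℕ) (z : Fin H → A) :
    (1:ℝ) ≤ ∑ y : Fin H → A, if ∀ i : Fin H, (i : ℕ) < h → y i = z i then (1:ℝ) else 0 := by
  have := Finset.single_le_sum (f := fun y : Fin H → A =>
      if ∀ i : Fin H, (i : ℕ) < h → y i = z i then (1:ℝ) else 0)
    (fun y _ => by split <;> norm_num) (Finset.mem_univ z)
  simpa using this

lemma swap_sum (F : (Fin H → A) → ℝ) (h : ℕ) (S : (Fin H → A) → Prop)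
    [DecidablePred S]
    (hS : ∀ y y' : Fin H → A, (∀ i : Fin H, (i : ℕ) < h → y i = y' i) → (S y ↔ S y')) :
    (∑ y : Fin H → A, if S y then
        (∑ z : Fin H → A, if ∀ i : Fin H, (i : ℕ) < h → z i = y i then F z else 0) else 0)
      = ∑ z : Fin H → A, if S z then
          (∑ y : Fin H → A, if ∀ i : Fin H, (i : ℕ) < h → y i = z i then (1:ℝ) else 0) * F z
        else 0 := by
  have step : ∀ y : Fin H → A, (if S y then
      (∑ z : Fin H → A, if ∀ i : Fin H, (i : ℕ) < h → z i = y i then F z else 0) else 0)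
      = ∑ z : Fin H → A, if S y ∧ (∀ i : Fin H, (i : ℕ) < h → z i = y i) then F z else 0 := by
    intro y
    by_cases hy : S y
    · simp only [hy, if_true, true_and]
    · simp [hy]
  rw [Finset.sum_congr rfl fun y _ => step y, Finset.sum_comm]
  refine Finset.sum_congr rfl fun z _ => ?_
  by_cases hz : S z
  · rw [if_pos hz, Finset.sum_mul]
    refine Finset.sum_congr rfl fun y _ => ?_
    by_cases ha : ∀ i : Fin H, (i : ℕ) < h → z i = y i
    · have ha' : ∀ i : Fin H, (i : ℕ) < h → y i = z i := fun i hi => (ha i hi).symm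
      rw [if_pos ⟨(hS z y ha).mp hz, ha⟩, if_pos ha', one_mul]
    · have ha' : ¬ ∀ i : Fin H, (i : ℕ) < h → y i = z i := by
        intro hc; exact ha fun i hi => (hc i hi).symm
      rw [if_neg (fun hc => ha hc.2), if_neg ha', zero_mul]
  · rw [if_neg hz]
    exact Finset.sum_eq_zero fun y _ => if_neg fun hc => hz ((hS z y hc.2).mpr hc.1)

lemma marg_nonneg (πref : (Fin H → A) → ℝ) (hπ : ∀ z, 0 ≤ πref z) (h : ℕ) (y : Fin H → A) :
    0 ≤ prefixMarg πref h y := by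
  unfold prefixMarg
  refine Finset.sum_nonneg fun z _ => ?_
  split
  · exact hπ z
  · exact le_rfl

lemma vstar_nonneg (πref τ : (Fin H → A) → ℝ) (hπ : ∀ z, 0 ≤ πref z) (hτ : ∀ z, 0 ≤ τ z)
    (h : ℕ) (y : Fin H → A) : 0 ≤ prefixVstar πref τ h y := by
  unfold prefixVstar
  refine div_nonneg (Finset.sum_nonneg fun z _ => ?_) (marg_nonneg πref hπ h y)
  split
  · exact mul_nonneg (hπ z) (hτ z)
  · exact le_rfl

lemma g_eq (πref τ : (Fin H → A) → ℝ) (hπ : ∀ z, 0 ≤ πref z) (h : ℕ) (y : Fin H → A) :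
    (∑ z : Fin H → A, if ∀ i : Fin H, (i : ℕ) < h → z i = y i then πref z * τ z else 0)
      = prefixMarg πref h y * prefixVstar πref τ h y := by
  unfold prefixVstar
  by_cases hM : prefixMarg πref h y = 0
  · rw [hM, zero_mul]
    refine Finset.sum_eq_zero fun z _ => ?_
    by_cases ha : ∀ i : Fin H, (i : ℕ) < h → z i = y i
    · rw [if_pos ha]
      unfold prefixMarg at hM
      have h0 : (if ∀ i : Fin H, (i : ℕ) < h → z i = y i then πref z else 0) = 0 :=
        (Finset.sum_eq_zero_iff_of_nonneg (fun z _ => by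
          split
          · exact hπ z
          · exact le_rfl)).mp hM z (Finset.mem_univ z)
      rw [if_pos ha] at h0
      rw [h0, zero_mul]
    · rw [if_neg ha]
  · rw [mul_comm, div_mul_cancel₀ _ hM]

lemma levelH_marg (μ : (Fin H → A) → ℝ) (z : Fin H → A) :
    prefixMarg μ H z = μ z := by
  unfold prefixMarg
  have key : ∀ z' : Fin H → A, (∀ i : Fin H, (i : ℕ) < H → z' i = z i) ↔ z' = z := by
    intro z'
    constructor
    · intro hz; funext i; exact hz i i.isLt
    · intro hz i _; rw [hz]
  rw [Finset.sum_congr rfl fun z' _ => if_congr (key z') rfl rfl]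
  simp

lemma levelH_vstar (πref τ : (Fin H → A) → ℝ) (z : Fin H → A) (h0 : πref z ≠ 0) :
    prefixVstar πref τ H z = τ z := by
  unfold prefixVstar
  have hnum : (∑ z' : Fin H → A,
      if ∀ i : Fin H, (i : ℕ) < H → z' i = z i then πref z' * τ z' else 0)
      = πref z * τ z := levelH_marg (fun w => πref w * τ w) z
  rw [hnum, levelH_marg]
  exact mul_div_cancel_left₀ (τ z) h0

end helper

/-- **The bad sets have small mass under π⋆.** Let `π⋆ ∝ π_ref·τ`, and suppose the
approximate value function `V̂` (a nonnegative function of the `h`-prefix, positive and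
vanishing together with `V⋆` on the support of `π⋆`) satisfies the average-case error
bounds `E_{π⋆}[V̂/V⋆] ≤ κ` and `E_{π⋆}[V⋆/V̂] ≤ κ` at each level `h ∈ [H]`. Then for
every `h ∈ [H]` and `η > 0`, the bad set
`B_{h,η} = { y_{1:h} : π_ref(y_{1:h})·V̂(y_{1:h}) < (η²/4κ²)·∑_{y_{h+1:H}} π_ref(y_{1:H})·V̂(y_{1:H}) }`
satisfies `π⋆(B_{h,η}) ≤ η`. -/
theorem bad_set_mass {H : ℕ} {A : Type*} [Fintype A] [DecidableEq A]
    (κ : ℝ) (hκ : 1 ≤ κ)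
    (πref τ : (Fin H → A) → ℝ)
    (hπ : ∀ z, 0 ≤ πref z) (hπ1 : ∑ z, πref z = 1)
    (hτ : ∀ z, 0 ≤ τ z) (hτpos : 0 < ∑ z, πref z * τ z)
    (πstar : (Fin H → A) → ℝ)
    (hπstar : ∀ z, πstar z = πref z * τ z / ∑ z', πref z' * τ z')
    (Vhat : ℕ → (Fin H → A) → ℝ)
    (hVhatPrefix : ∀ (h : ℕ) (y y' : Fin H → A),
      (∀ i : Fin H, (i : ℕ) < h → y i = y' i) → Vhat h y = Vhat h y')
    (hVhatNonneg : ∀ h y, 0 ≤ Vhat h y)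
    (hVhatPos : ∀ h, 1 ≤ h → h ≤ H → ∀ z, 0 < πstar z → 0 < Vhat h z)
    (hVhatVanish : ∀ h, 1 ≤ h → h ≤ H → ∀ z, prefixVstar πref τ h z = 0 → Vhat h z = 0)
    (havg : ∀ h, 1 ≤ h → h ≤ H →
      (∑ z, πstar z * (Vhat h z / prefixVstar πref τ h z)) ≤ κ ∧
      (∑ z, πstar z * (prefixVstar πref τ h z / Vhat h z)) ≤ κ) :
    ∀ h, 1 ≤ h → h ≤ H → ∀ η : ℝ, 0 < η →
      (∑ z, if prefixMarg πref h z * Vhat h z <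
          η ^ 2 / (4 * κ ^ 2) * leafSum πref (Vhat H) h z then πstar z else 0) ≤ η := by
  intro h h1 hH η hη
  classical
  rcases isEmpty_or_nonempty (Fin H → A) with hE | hNE
  · rw [Finset.univ_eq_empty, Finset.sum_empty]
    exact hη.le
  obtain ⟨z₀⟩ := hNE
  have hκ0 : (0:ℝ) < κ := lt_of_lt_of_le one_pos hκ
  have h1H : 1 ≤ H := le_trans h1 hH
  have hZ : 0 < ∑ z, πref z * τ z := hτpos
  have hπs : ∀ z, 0 ≤ πstar z := fun z => by
    rw [hπstar z]
    exact div_nonneg (mul_nonneg (hπ z) (hτ z)) hZ.le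
  -- split the bad set according to whether `V⋆/V̂` is large
  have hsplit :
      (∑ z, if prefixMarg πref h z * Vhat h z <
          η ^ 2 / (4 * κ ^ 2) * leafSum πref (Vhat H) h z then πstar z else 0)
      = (∑ z, if (prefixMarg πref h z * Vhat h z <
            η ^ 2 / (4 * κ ^ 2) * leafSum πref (Vhat H) h z)
          ∧ (2 * κ * Vhat h z < η * prefixVstar πref τ h z) then πstar z else 0)
      + (∑ z, if (prefixMarg πref h z * Vhat h z <
            η ^ 2 / (4 * κ ^ 2) * leafSum πref (Vhat H) h z)
          ∧ ¬ (2 * κ * Vhat h z < η * prefixVstar πref τ h z) then πstar z else 0) := by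
    rw [← Finset.sum_add_distrib]
    refine Finset.sum_congr rfl fun z _ => ?_
    by_cases hb : prefixMarg πref h z * Vhat h z <
        η ^ 2 / (4 * κ ^ 2) * leafSum πref (Vhat H) h z
    · by_cases hx : 2 * κ * Vhat h z < η * prefixVstar πref τ h z
      · simp [hb, hx]
      · simp [hb, hx]
    · simp [hb]
  -- first piece : Markov on V⋆/V̂
  have hT1 : (∑ z, if (prefixMarg πref h z * Vhat h z <
        η ^ 2 / (4 * κ ^ 2) * leafSum πref (Vhat H) h z)
      ∧ (2 * κ * Vhat h z < η * prefixVstar πref τ h z) then πstar z else 0) ≤ η / 2 := by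
    have hm := markov_aux πstar (fun z => prefixVstar πref τ h z / Vhat h z) κ (2 * κ / η)
      (by positivity) hπs
      (fun z => div_nonneg (vstar_nonneg πref τ hπ hτ h z) (hVhatNonneg h z))
      (havg h h1 hH).2
      (fun z => (prefixMarg πref h z * Vhat h z <
          η ^ 2 / (4 * κ ^ 2) * leafSum πref (Vhat H) h z)
        ∧ (2 * κ * Vhat h z < η * prefixVstar πref τ h z))
      ?_
    · have heq : κ / (2 * κ / η) = η / 2 := by
        field_simp
      rw [heq] at hm
      exact hm
    · intro z hz hw
      have hWpos : 0 < Vhat h z := hVhatPos h h1 hH z hw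
      rw [div_le_div_iff₀ (by positivity) hWpos]
      nlinarith [hz.2]
  -- second piece
  have hT2 : (∑ z, if (prefixMarg πref h z * Vhat h z <
        η ^ 2 / (4 * κ ^ 2) * leafSum πref (Vhat H) h z)
      ∧ ¬ (2 * κ * Vhat h z < η * prefixVstar πref τ h z) then πstar z else 0) ≤ η / 2 := by
    set S : (Fin H → A) → Prop := fun z =>
      (prefixMarg πref h z * Vhat h z <
        η ^ 2 / (4 * κ ^ 2) * leafSum πref (Vhat H) h z)
      ∧ ¬ (2 * κ * Vhat h z < η * prefixVstar πref τ h z) with hSdef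
    have hSinv' : ∀ y y' : Fin H → A, (∀ i : Fin H, (i : ℕ) < h → y i = y' i) →
        (S y ↔ S y') := by
      intro y y' hyy
      have hMe : prefixMarg πref h y = prefixMarg πref h y' :=
        prefix_sum_congr πref h y y' hyy
      have hLe : leafSum πref (Vhat H) h y = leafSum πref (Vhat H) h y' :=
        prefix_sum_congr (fun z => πref z * Vhat H z) h y y' hyy
      have hWe : Vhat h y = Vhat h y' := hVhatPrefix h y y' hyy
      have hnum : (∑ z : Fin H → A, if ∀ i : Fin H, (i : ℕ) < h → z i = y i
          then πref z * τ z else 0)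
          = ∑ z : Fin H → A, if ∀ i : Fin H, (i : ℕ) < h → z i = y' i
          then πref z * τ z else 0 := prefix_sum_congr (fun z => πref z * τ z) h y y' hyy
      have hVe : prefixVstar πref τ h y = prefixVstar πref τ h y' := by
        unfold prefixVstar
        rw [hnum, hMe]
      rw [hSdef]
      simp only []
      rw [hMe, hLe, hWe, hVe]
    have hN1 : (1:ℝ) ≤ ∑ y : Fin H → A,
        (if ∀ i : Fin H, (i : ℕ) < h → y i = z₀ i then (1:ℝ) else 0) := count_pos h z₀
    have hpoint : ∀ z : Fin H → A, S z →
        (∑ z' : Fin H → A, if ∀ i : Fin H, (i : ℕ) < h → z' i = z i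
            then πref z' * τ z' else 0)
          ≤ η / (2 * κ) * leafSum πref (Vhat H) h z := by
      intro z hz
      obtain ⟨hb, hx⟩ := hz
      have hg := g_eq πref τ hπ h z
      have hx' : η * prefixVstar πref τ h z ≤ 2 * κ * Vhat h z := le_of_not_gt hx
      have hMn := marg_nonneg πref hπ h z
      have h1' : η * (prefixMarg πref h z * prefixVstar πref τ h z)
          ≤ 2 * κ * (prefixMarg πref h z * Vhat h z) := by nlinarith
      have h2' : 4 * κ ^ 2 * (prefixMarg πref h z * Vhat h z)
          ≤ η ^ 2 * leafSum πref (Vhat H) h z := by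
        have h3' := mul_le_mul_of_nonneg_left hb.le
          (by positivity : (0:ℝ) ≤ 4 * κ ^ 2)
        have h4' : 4 * κ ^ 2 * (η ^ 2 / (4 * κ ^ 2) * leafSum πref (Vhat H) h z)
            = η ^ 2 * leafSum πref (Vhat H) h z := by
          field_simp
        linarith
      have h1'' := mul_le_mul_of_nonneg_left h1' (by positivity : (0:ℝ) ≤ 2 * κ)
      have h5' : η * (2 * κ * (prefixMarg πref h z * prefixVstar πref τ h z))
          ≤ η * (η * leafSum πref (Vhat H) h z) := by nlinarith [h1'', h2']
      have h6' := le_of_mul_le_mul_left h5' hη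
      rw [hg, div_mul_eq_mul_div, le_div_iff₀ (by positivity : (0:ℝ) < 2 * κ)]
      linarith
    have hswap1 : (∑ y, if S y then (∑ z : Fin H → A,
          if ∀ i : Fin H, (i : ℕ) < h → z i = y i then πref z * τ z else 0) else 0)
        = (∑ y : Fin H → A, if ∀ i : Fin H, (i : ℕ) < h → y i = z₀ i then (1:ℝ) else 0)
          * ∑ z, if S z then πref z * τ z else 0 := by
      calc (∑ y, if S y then (∑ z : Fin H → A,
            if ∀ i : Fin H, (i : ℕ) < h → z i = y i then πref z * τ z else 0) else 0)
          = ∑ z, if S z then (∑ y : Fin H → A,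
              if ∀ i : Fin H, (i : ℕ) < h → y i = z i then (1:ℝ) else 0)
              * (πref z * τ z) else 0 :=
            swap_sum (fun z => πref z * τ z) h S hSinv'
        _ = _ := by
          rw [Finset.mul_sum]
          refine Finset.sum_congr rfl fun z _ => ?_
          by_cases hz : S z
          · rw [if_pos hz, if_pos hz, count_const h z z₀]
          · rw [if_neg hz, if_neg hz, mul_zero]
    have hswap2 : (∑ y, if S y then leafSum πref (Vhat H) h y else 0)
        = (∑ y : Fin H → A, if ∀ i : Fin H, (i : ℕ) < h → y i = z₀ i then (1:ℝ) else 0)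
          * ∑ z, if S z then πref z * Vhat H z else 0 := by
      calc (∑ y, if S y then leafSum πref (Vhat H) h y else 0)
          = ∑ z, if S z then (∑ y : Fin H → A,
              if ∀ i : Fin H, (i : ℕ) < h → y i = z i then (1:ℝ) else 0)
              * (πref z * Vhat H z) else 0 :=
            swap_sum (fun z => πref z * Vhat H z) h S hSinv'
        _ = _ := by
          rw [Finset.mul_sum]
          refine Finset.sum_congr rfl fun z _ => ?_
          by_cases hz : S z
          · rw [if_pos hz, if_pos hz, count_const h z z₀]
          · rw [if_neg hz, if_neg hz, mul_zero]
    have hmono : (∑ y, if S y then (∑ z : Fin H → A,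
          if ∀ i : Fin H, (i : ℕ) < h → z i = y i then πref z * τ z else 0) else 0)
        ≤ ∑ y, if S y then η / (2 * κ) * leafSum πref (Vhat H) h y else 0 := by
      refine Finset.sum_le_sum fun y _ => ?_
      by_cases hy : S y
      · rw [if_pos hy, if_pos hy]; exact hpoint y hy
      · simp [hy]
    have hfac : (∑ y, if S y then η / (2 * κ) * leafSum πref (Vhat H) h y else 0)
        = η / (2 * κ) * ∑ y, if S y then leafSum πref (Vhat H) h y else 0 := by
      rw [Finset.mul_sum]
      refine Finset.sum_congr rfl fun y _ => ?_
      by_cases hy : S y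
      · rw [if_pos hy, if_pos hy]
      · rw [if_neg hy, if_neg hy, mul_zero]
    have hHterm : ∀ z, πref z * Vhat H z
        = (∑ z', πref z' * τ z') * (πstar z * (Vhat H z / prefixVstar πref τ H z)) := by
      intro z
      by_cases h0 : πref z = 0
      · simp [hπstar z, h0]
      · by_cases ht0 : τ z = 0
        · have hv0 : Vhat H z = 0 := hVhatVanish H h1H le_rfl z
            (by rw [levelH_vstar πref τ z h0, ht0])
          simp [hv0]
        · rw [hπstar z, levelH_vstar πref τ z h0]
          field_simp
    have hA2 : (∑ z, if S z then πref z * Vhat H z else 0)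
        ≤ κ * ∑ z', πref z' * τ z' := by
      calc (∑ z, if S z then πref z * Vhat H z else 0)
          ≤ ∑ z, πref z * Vhat H z := by
            refine Finset.sum_le_sum fun z _ => ?_
            by_cases hz : S z
            · rw [if_pos hz]
            · rw [if_neg hz]; exact mul_nonneg (hπ z) (hVhatNonneg H z)
        _ = (∑ z', πref z' * τ z')
            * ∑ z, πstar z * (Vhat H z / prefixVstar πref τ H z) := by
            rw [Finset.mul_sum]
            exact Finset.sum_congr rfl fun z _ => hHterm z
        _ ≤ (∑ z', πref z' * τ z') * κ :=
            mul_le_mul_of_nonneg_left (havg H h1H le_rfl).1 hZ.le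
        _ = κ * ∑ z', πref z' * τ z' := mul_comm _ _
    have hA1A2 : (∑ z, if S z then πref z * τ z else 0)
        ≤ η / (2 * κ) * ∑ z, if S z then πref z * Vhat H z else 0 := by
      have hNpos : (0:ℝ) < ∑ y : Fin H → A,
          (if ∀ i : Fin H, (i : ℕ) < h → y i = z₀ i then (1:ℝ) else 0) :=
        lt_of_lt_of_le one_pos hN1
      have hh : (∑ y : Fin H → A,
            (if ∀ i : Fin H, (i : ℕ) < h → y i = z₀ i then (1:ℝ) else 0))
            * (∑ z, if S z then πref z * τ z else 0)
          ≤ (∑ y : Fin H → A,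
            (if ∀ i : Fin H, (i : ℕ) < h → y i = z₀ i then (1:ℝ) else 0))
            * (η / (2 * κ) * ∑ z, if S z then πref z * Vhat H z else 0) := by
        calc (∑ y : Fin H → A,
              (if ∀ i : Fin H, (i : ℕ) < h → y i = z₀ i then (1:ℝ) else 0))
              * (∑ z, if S z then πref z * τ z else 0)
            = (∑ y, if S y then (∑ z : Fin H → A,
                if ∀ i : Fin H, (i : ℕ) < h → z i = y i then πref z * τ z else 0) else 0) :=
              hswap1.symm
          _ ≤ ∑ y, if S y then η / (2 * κ) * leafSum πref (Vhat H) h y else 0 := hmono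
          _ = η / (2 * κ) * ∑ y, if S y then leafSum πref (Vhat H) h y else 0 := hfac
          _ = η / (2 * κ) * ((∑ y : Fin H → A,
                (if ∀ i : Fin H, (i : ℕ) < h → y i = z₀ i then (1:ℝ) else 0))
                * ∑ z, if S z then πref z * Vhat H z else 0) := by rw [hswap2]
          _ = (∑ y : Fin H → A,
                (if ∀ i : Fin H, (i : ℕ) < h → y i = z₀ i then (1:ℝ) else 0))
                * (η / (2 * κ) * ∑ z, if S z then πref z * Vhat H z else 0) := by ring
      exact le_of_mul_le_mul_left hh hNpos
    have hfin : (∑ z, if S z then πref z * τ z else 0)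
        ≤ η / (2 * κ) * (κ * ∑ z', πref z' * τ z') :=
      le_trans hA1A2 (mul_le_mul_of_nonneg_left hA2 (by positivity))
    have hTeq : (∑ z, if S z then πstar z else 0)
        = (∑ z, if S z then πref z * τ z else 0) / (∑ z', πref z' * τ z') := by
      rw [Finset.sum_div]
      refine Finset.sum_congr rfl fun z _ => ?_
      by_cases hz : S z
      · rw [if_pos hz, if_pos hz]; exact hπstar z
      · rw [if_neg hz, if_neg hz, zero_div]
    have hend : η / (2 * κ) * (κ * ∑ z', πref z' * τ z') / (∑ z', πref z' * τ z')
        = η / 2 := by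
      field_simp
    show (∑ z, if S z then πstar z else 0) ≤ η / 2
    rw [hTeq]
    calc (∑ z, if S z then πref z * τ z else 0) / (∑ z', πref z' * τ z')
        ≤ η / (2 * κ) * (κ * ∑ z', πref z' * τ z') / (∑ z', πref z' * τ z') := by gcongr
      _ = η / 2 := hend
  rw [hsplit]
  linarith [hT1, hT2]
end
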